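/- Let K be an ideal of K[[x,y_1,...,y_{n−1}]] of finite order c ≥ 1, and V = {x = 0} a hypersurface of weak maximal contact with K. Then the coefficient ideal coeff_V K is the zero ideal if and only if K is bold regular (K = (x')^c for some parameter x' with V = {x'=0}, i.e., K is a power of a regular principal ideal whose support is V) or K = (1). -/

import Mathlib

noncomputable section

set_option synthInstance.maxHeartbeats 1000000
set_option maxHeartbeats 1000000

variable {Kf : Type*} [Field Kf] {m : ℕ}

/-- `K[[x, y_1, ..., y_{n-1}]]` viewed as power series in `x` over `A = K[[y]]`. -/
abbrev PS (Kf : Type*) [Field Kf] (m : ℕ) := PowerSeries (MvPowerSeries (Fin m) Kf)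

/-- The total order of `h = Σ_j a_j(y) x^j`: `min_j (j + ord a_j)`. -/
def ordT (h : PS Kf m) : ℕ∞ :=
  ⨅ j : ℕ, ((j : ℕ∞) +
    MvPowerSeries.order (PowerSeries.coeff (R := MvPowerSeries (Fin m) Kf) j h))

/-- The order of an ideal of `K[[x,y]]`. -/
def ordTI (I : Ideal (PS Kf m)) : ℕ∞ := ⨅ f : I, ordT (f : PS Kf m)

/-- The order of an ideal of `A = K[[y]]`. -/
def ordAI (J : Ideal (MvPowerSeries (Fin m) Kf)) : ℕ∞ :=
  ⨅ a : J, MvPowerSeries.order (a : MvPowerSeries (Fin m) Kf)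

/-- The coefficient ideal of an ideal `I` of `K[[x,y]]` with respect to `V = {x=0}` and
control `c`: `coeff_V I = Σ_{f∈I} Σ_{j<c} (a_{f,j})^{c!/(c−j)}`. -/
def coeffIdealPS (I : Ideal (PS Kf m)) (c : ℕ) : Ideal (MvPowerSeries (Fin m) Kf) :=
  ⨆ f : I, ∑ j ∈ Finset.range c,
    Ideal.span {PowerSeries.coeff (R := MvPowerSeries (Fin m) Kf) j (f : PS Kf m)} ^
      (Nat.factorial c / (c - j))

section

open PowerSeries

theorem coeffIdealPS_eq_bot_iff (I : Ideal (PS Kf m)) (c : ℕ) :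
    coeffIdealPS I c = ⊥ ↔ I ≤ Ideal.span {X ^ c} := by
  have hpow_eq_bot (a : MvPowerSeries (Fin m) Kf) {j : ℕ} (hj : j < c) :
      Ideal.span {a} ^ (Nat.factorial c / (c - j)) = ⊥ ↔ a = 0 := by
    have hexp : Nat.factorial c / (c - j) ≠ 0 :=
      (Nat.div_pos ((Nat.sub_le c j).trans c.self_le_factorial) (by omega)).ne'
    rw [Ideal.span_singleton_pow, Ideal.span_singleton_eq_bot, pow_eq_zero_iff hexp]
  simp only [coeffIdealPS, iSup_eq_bot, Ideal.sum_eq_sup, Finset.sup_eq_bot_iff, Finset.mem_range,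
    SetLike.le_def, Ideal.mem_span_singleton, X_pow_dvd_iff, Subtype.forall]
  exact forall₂_congr fun f _ => forall₂_congr fun j hj => hpow_eq_bot _ hj

theorem ordT_eq_zero_iff (g : PS Kf m) : ordT g = 0 ↔ IsUnit g := by
  rw [isUnit_iff_constantCoeff, MvPowerSeries.isUnit_iff_constantCoeff, isUnit_iff_ne_zero,
    ne_eq, ← MvPowerSeries.order_ne_zero_iff_constCoeff_eq_zero, not_not]
  simp only [ordT, ENat.iInf_eq_zero, add_eq_zero, Nat.cast_eq_zero]
  exact ⟨fun ⟨_, rfl, h⟩ => by simpa using h, fun h => ⟨0, rfl, by simpa using h⟩⟩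

theorem ordTI_top : ordTI (⊤ : Ideal (PS Kf m)) = 0 := by
  rw [ordTI, ENat.iInf_eq_zero]
  exact ⟨⟨1, trivial⟩, (ordT_eq_zero_iff 1).2 isUnit_one⟩

theorem add_ordT_le_ordT_X_pow_mul (c : ℕ) (g : PS Kf m) :
    c + ordT g ≤ ordT (X ^ c * g) := by
  unfold ordT
  refine le_iInf fun j => ?_
  rw [coeff_X_pow_mul']
  split_ifs with hcj
  · obtain ⟨k, rfl⟩ := Nat.exists_eq_add_of_le hcj
    rw [Nat.add_sub_cancel_left, Nat.cast_add, add_assoc]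
    exact add_le_add_right (iInf_le (fun i : ℕ => (i : ℕ∞) + (coeff i g).order) k) _
  · simp

theorem exists_mem_ordT_eq_ordTI (I : Ideal (PS Kf m)) : ∃ f ∈ I, ordT f = ordTI I := by
  obtain ⟨⟨f, hf⟩, hmin⟩ := ENat.exists_eq_iInf fun f : I => ordT (f : PS Kf m)
  exact ⟨f, hf, hmin⟩

/-- An element of order `c` in `(X ^ c)` is `X ^ c` times a unit. -/
theorem eq_span_X_pow_of_le_of_ordTI_eq {I : Ideal (PS Kf m)} {c : ℕ}
    (hle : I ≤ Ideal.span {X ^ c}) (hord : ordTI I = c) : I = Ideal.span {X ^ c} := by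
  obtain ⟨f, hfI, hf⟩ := exists_mem_ordT_eq_ordTI I
  obtain ⟨g, rfl⟩ := Ideal.mem_span_singleton.1 (hle hfI)
  have hg : ordT g = 0 := by
    have h := add_ordT_le_ordT_X_pow_mul c g
    rw [hf, hord] at h
    simpa using
      (ENat.add_le_add_iff_left (ENat.natCast_ne_top c)).1 (h.trans_eq (add_zero _).symm)
  obtain ⟨u, rfl⟩ := (ordT_eq_zero_iff g).1 hg
  refine le_antisymm hle ((Ideal.span_singleton_le_iff_mem I).2 ?_)
  simpa using I.mul_mem_right (↑u⁻¹ : PS Kf m) hfI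

end

theorem coeffIdeal_eq_bot_iff_general (I : Ideal (PS Kf m)) (c : ℕ)
    (hord : ordTI I = c) :
    coeffIdealPS I c = ⊥ ↔
      (I = Ideal.span {PowerSeries.X} ^ c ∨ I = ⊤) := by
  have hrhs : I = Ideal.span {PowerSeries.X} ^ c ∨ I = ⊤ ↔
      I = Ideal.span {PowerSeries.X ^ c} := by
    rw [Ideal.span_singleton_pow]
    refine ⟨?_, Or.inl⟩
    rintro (h | rfl)
    · exact h
    · obtain rfl : c = 0 := by exact_mod_cast hord.symm.trans ordTI_top
      simp
  rw [hrhs, coeffIdealPS_eq_bot_iff]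
  exact ⟨fun hle => eq_span_X_pow_of_le_of_ordTI_eq hle hord, le_of_eq⟩

/-- Let `I` be an ideal of `K[[x,y]]` of finite order `c ≥ 1` and suppose `V = {x=0}`
has weak maximal contact with `I` (it maximizes the order of the coefficient ideal
over all coordinate changes).  Then `coeff_V I = 0` if and only if `I` is bold regular
with support `V` (`I = (x)^c`) or `I = (1)`. -/
theorem coeffIdeal_eq_bot_iff (I : Ideal (PS Kf m)) (c : ℕ) (hc : 1 ≤ c)
    (hord : ordTI I = c)
    (hwmc : ∀ σ : PS Kf m ≃+* PS Kf m,
      ordAI (coeffIdealPS (Ideal.map σ.toRingHom I) c) ≤ ordAI (coeffIdealPS I c)) :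
    coeffIdealPS I c = ⊥ ↔
      (I = Ideal.span {PowerSeries.X} ^ c ∨ I = ⊤) :=
  coeffIdeal_eq_bot_iff_general I c hord

end
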